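/- With the functions f₁, f₂, f₃, f₄, f₅ and d = 0.06 as specified, the function Φ(G) := f₂(G) + f₃(G)·f₄(f₁(G)/d) − f₅(f₁(G)/d) is strictly increasing on (0, ∞); moreover Φ(G) → −180 as G → 0⁺ and Φ(G) → +∞ as G → +∞. (Here f₁, f₂, f₄ are strictly increasing, f₃ is strictly increasing and positive, and f₅ is strictly decreasing on (0, ∞) because its Hill exponent h₅ = −8.54 is negative.) -/

import Mathlib

/-- Insulin production pathway `f₁(G) = R_m G^{h₁}/(G^{h₁} + (V_g k₁)^{h₁})`. -/
noncomputable def f₁ (G : ℝ) : ℝ := 210 * G ^ 2 / (G ^ 2 + 60000 ^ 2)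

/-- Insulin-independent glucose utilization `f₂`. -/
noncomputable def f₂ (G : ℝ) : ℝ :=
  72 * G ^ (1.8 : ℝ) / (G ^ (1.8 : ℝ) + (1035 : ℝ) ^ (1.8 : ℝ))

/-- Insulin-dependent glucose utilization factor `f₃(G) = G/(C₃ V_g)`. -/
noncomputable def f₃ (G : ℝ) : ℝ := G / 10000

/-- Insulin-dependent glucose utilization factor `f₄`. -/
noncomputable def f₄ (I : ℝ) : ℝ :=
  40 + 900 * I ^ (1.5 : ℝ) /
    (I ^ (1.5 : ℝ) + ((1 / 11 + 1 / 20 : ℝ)⁻¹ * 80) ^ (1.5 : ℝ))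

/-- Hepatic glucose production `f₅` (Hill exponent `h₅ = −8.54`). -/
noncomputable def f₅ (I : ℝ) : ℝ :=
  180 * I ^ (-8.54 : ℝ) / (I ^ (-8.54 : ℝ) + ((3 : ℝ) * 26.7) ^ (-8.54 : ℝ))

/-- The equilibrium function `Φ(G) = f₂(G) + f₃(G)f₄(f₁(G)/d) − f₅(f₁(G)/d)`, `d = 0.06`. -/
noncomputable def Φ (G : ℝ) : ℝ :=
  f₂ G + f₃ G * f₄ (f₁ G / 0.06) - f₅ (f₁ G / 0.06)

/-!
Each of `f₁, f₂, f₄, f₅` is an affine image of a Hill function `t ↦ t / (t + K)` (`K > 0`),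
which is strictly increasing, composed with a power `G ↦ G ^ h`. For `h > 0` this makes it
strictly increasing, for `h₅ = -8.54` strictly decreasing. Hence the uptake terms `f₂(G)` and
`f₃(G) f₄(I*)` increase with `G` while hepatic production `f₅(I*)` decreases, so `Φ` is strictly
increasing. As `G → 0⁺`, also `I* → 0⁺`, so `f₂`, `f₃` tend to `0`, `f₄` to `40`, and
`f₅ → 180` because `I ^ (-8.54) → ∞`. As `G → ∞`, `Φ(G) ≥ 40 G / 10000 - 180`.
-/

open Filter Set Topology

section HillFunction

variable {α : Type*} {K : ℝ}

lemma strictMonoOn_div_add_const (hK : 0 < K) :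
    StrictMonoOn (fun t : ℝ => t / (t + K)) (Ioi (-K)) := by
  intro t ht u hu htu
  rw [mem_Ioi] at ht hu
  rw [div_lt_div_iff₀ (by linarith) (by linarith)]
  nlinarith

lemma div_add_const_le_one {t : ℝ} (ht : 0 ≤ t) (hK : 0 < K) : t / (t + K) ≤ 1 :=
  div_le_one_of_le₀ (by linarith) (by linarith)

lemma tendsto_div_add_const_of_tendsto_zero {l : Filter α} {g : α → ℝ}
    (hg : Tendsto g l (𝓝 0)) (hK : K ≠ 0) :
    Tendsto (fun x => g x / (g x + K)) l (𝓝 0) := by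
  have h := hg.div (hg.add_const K) (by rwa [zero_add])
  rwa [zero_div] at h

lemma tendsto_div_add_const_of_tendsto_atTop {l : Filter α} {g : α → ℝ}
    (hg : Tendsto g l atTop) :
    Tendsto (fun x => g x / (g x + K)) l (𝓝 1) := by
  have hden : Tendsto (fun x => g x + K) l atTop := tendsto_atTop_add_const_right l K hg
  have hrest : Tendsto (fun x => 1 - K / (g x + K)) l (𝓝 (1 - 0)) :=
    (tendsto_const_nhds.div_atTop hden).const_sub 1
  rw [sub_zero] at hrest
  refine hrest.congr' ?_
  filter_upwards [hden.eventually_gt_atTop 0] with x hx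
  field_simp
  ring

variable [Preorder α] {s : Set α} {g : α → ℝ} {c : ℝ}

lemma StrictMonoOn.const_mul_div_add_const (hg : StrictMonoOn g s) (hg₀ : ∀ x ∈ s, 0 ≤ g x)
    (hc : 0 < c) (hK : 0 < K) : StrictMonoOn (fun x => c * g x / (g x + K)) s := by
  intro x hx y hy hxy
  have hmem : ∀ z ∈ s, g z ∈ Ioi (-K) := fun z hz => by
    rw [mem_Ioi]; linarith [hg₀ z hz]
  simp only [mul_div_assoc]
  exact mul_lt_mul_of_pos_left
    (strictMonoOn_div_add_const hK (hmem x hx) (hmem y hy) (hg hx hy hxy)) hc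

lemma StrictAntiOn.const_mul_div_add_const (hg : StrictAntiOn g s) (hg₀ : ∀ x ∈ s, 0 ≤ g x)
    (hc : 0 < c) (hK : 0 < K) : StrictAntiOn (fun x => c * g x / (g x + K)) s := by
  intro x hx y hy hxy
  have hmem : ∀ z ∈ s, g z ∈ Ioi (-K) := fun z hz => by
    rw [mem_Ioi]; linarith [hg₀ z hz]
  simp only [mul_div_assoc]
  exact mul_lt_mul_of_pos_left
    (strictMonoOn_div_add_const hK (hmem y hy) (hmem x hx) (hg hx hy hxy)) hc

end HillFunction

lemma tendsto_rpow_nhdsGT_zero {r : ℝ} (hr : 0 < r) :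
    Tendsto (fun x : ℝ => x ^ r) (𝓝[>] 0) (𝓝 0) := by
  simpa [Real.zero_rpow hr.ne'] using
    (Real.continuousAt_rpow_const 0 r (Or.inr hr.le)).tendsto.mono_left nhdsWithin_le_nhds

lemma strictMonoOn_rpow_Ioi {r : ℝ} (hr : 0 < r) :
    StrictMonoOn (fun x : ℝ => x ^ r) (Ioi 0) :=
  (Real.strictMonoOn_rpow_Ici_of_exponent_pos hr).mono Ioi_subset_Ici_self

lemma f₁_pos {G : ℝ} (hG : 0 < G) : 0 < f₁ G := by
  unfold f₁; positivity

lemma f₁_strictMonoOn : StrictMonoOn f₁ (Ioi 0) :=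
  ((pow_left_strictMonoOn₀ two_ne_zero).mono fun _ hG => le_of_lt hG).const_mul_div_add_const
    (fun G _ => sq_nonneg G) (by norm_num) (by norm_num)

lemma tendsto_f₁_nhdsGT_zero : Tendsto f₁ (𝓝[>] 0) (𝓝 0) := by
  have hsq : Tendsto (fun G : ℝ => G ^ 2) (𝓝[>] 0) (𝓝 0) := by
    simpa using ((continuous_pow 2).tendsto (0 : ℝ)).mono_left nhdsWithin_le_nhds
  unfold f₁
  simpa [mul_div_assoc] using
    (tendsto_div_add_const_of_tendsto_zero hsq (K := 60000 ^ 2) (by norm_num)).const_mul 210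

lemma f₂_nonneg {G : ℝ} (hG : 0 < G) : 0 ≤ f₂ G := by
  unfold f₂; positivity

lemma f₂_strictMonoOn : StrictMonoOn f₂ (Ioi 0) :=
  (strictMonoOn_rpow_Ioi (by norm_num)).const_mul_div_add_const
    (fun G hG => Real.rpow_nonneg (le_of_lt hG) _) (by norm_num) (by positivity)

lemma tendsto_f₂_nhdsGT_zero : Tendsto f₂ (𝓝[>] 0) (𝓝 0) := by
  unfold f₂
  simpa [mul_div_assoc] using
    (tendsto_div_add_const_of_tendsto_zero (tendsto_rpow_nhdsGT_zero (r := 1.8) (by norm_num))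
      (K := (1035 : ℝ) ^ (1.8 : ℝ)) (by positivity)).const_mul 72

lemma f₃_pos {G : ℝ} (hG : 0 < G) : 0 < f₃ G := by
  unfold f₃; positivity

lemma f₃_strictMono : StrictMono f₃ :=
  strictMono_id.div_const (by norm_num)

lemma tendsto_f₃_nhdsGT_zero : Tendsto f₃ (𝓝[>] 0) (𝓝 0) :=
  ((continuous_id.div_const (10000 : ℝ) : Continuous f₃).tendsto' 0 0 (zero_div _)).mono_left
    nhdsWithin_le_nhds

lemma forty_le_f₄ {I : ℝ} (hI : 0 < I) : 40 ≤ f₄ I := by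
  unfold f₄
  exact le_add_of_nonneg_right (by positivity)

lemma f₄_strictMonoOn : StrictMonoOn f₄ (Ioi 0) :=
  ((strictMonoOn_rpow_Ioi (by norm_num)).const_mul_div_add_const
    (fun I hI => Real.rpow_nonneg (le_of_lt hI) _) (by norm_num) (by positivity)).const_add 40

lemma tendsto_f₄_nhdsGT_zero : Tendsto f₄ (𝓝[>] 0) (𝓝 40) := by
  unfold f₄
  simpa [mul_div_assoc] using
    ((tendsto_div_add_const_of_tendsto_zero (tendsto_rpow_nhdsGT_zero (r := 1.5) (by norm_num))
      (K := ((1 / 11 + 1 / 20 : ℝ)⁻¹ * 80) ^ (1.5 : ℝ)) (by positivity)).const_mul 900).const_add 40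

lemma f₅_le {I : ℝ} (hI : 0 < I) : f₅ I ≤ 180 := by
  unfold f₅
  rw [mul_div_assoc]
  exact mul_le_of_le_one_right (by norm_num) (div_add_const_le_one (by positivity) (by positivity))

lemma f₅_strictAntiOn : StrictAntiOn f₅ (Ioi 0) :=
  (Real.strictAntiOn_rpow_Ioi_of_exponent_neg (by norm_num)).const_mul_div_add_const
    (fun I hI => Real.rpow_nonneg (le_of_lt hI) _) (by norm_num) (by positivity)

lemma tendsto_f₅_nhdsGT_zero : Tendsto f₅ (𝓝[>] 0) (𝓝 180) := by
  unfold f₅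
  simpa [mul_div_assoc] using
    (tendsto_div_add_const_of_tendsto_atTop (tendsto_rpow_neg_nhdsGT_zero (y := -8.54)
      (by norm_num)) (K := ((3 : ℝ) * 26.7) ^ (-8.54 : ℝ))).const_mul 180

/-- The paper's `I* = f₁(G*) / d`. -/
noncomputable def equilibriumInsulin (G : ℝ) : ℝ := f₁ G / 0.06

lemma Φ_apply (G : ℝ) :
    Φ G = f₂ G + f₃ G * f₄ (equilibriumInsulin G) - f₅ (equilibriumInsulin G) := rfl

lemma equilibriumInsulin_pos {G : ℝ} (hG : 0 < G) : 0 < equilibriumInsulin G :=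
  div_pos (f₁_pos hG) (by norm_num)

lemma equilibriumInsulin_strictMonoOn : StrictMonoOn equilibriumInsulin (Ioi 0) :=
  fun _ ha _ hb hab => div_lt_div_of_pos_right (f₁_strictMonoOn ha hb hab) (by norm_num)

lemma tendsto_equilibriumInsulin_nhdsGT_zero :
    Tendsto equilibriumInsulin (𝓝[>] 0) (𝓝[>] 0) := by
  refine tendsto_nhdsWithin_iff.2 ⟨?_, ?_⟩
  · have h := tendsto_f₁_nhdsGT_zero.div_const 0.06
    rwa [zero_div] at h
  · filter_upwards [self_mem_nhdsWithin] with G hG using equilibriumInsulin_pos hG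

lemma Φ_strictMonoOn : StrictMonoOn Φ (Ioi 0) := by
  intro a ha b hb hab
  have hI := equilibriumInsulin_strictMonoOn ha hb hab
  have hIa : equilibriumInsulin a ∈ Ioi 0 := equilibriumInsulin_pos ha
  have hIb : equilibriumInsulin b ∈ Ioi 0 := equilibriumInsulin_pos hb
  have huptake : f₃ a * f₄ (equilibriumInsulin a) < f₃ b * f₄ (equilibriumInsulin b) :=
    mul_lt_mul (f₃_strictMono hab) (f₄_strictMonoOn.monotoneOn hIa hIb hI.le)
      (by linarith [forty_le_f₄ hIa]) (f₃_pos hb).le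
  rw [Φ_apply, Φ_apply]
  linarith [f₂_strictMonoOn ha hb hab, f₅_strictAntiOn hIa hIb hI]

lemma tendsto_Φ_nhdsGT_zero : Tendsto Φ (𝓝[>] 0) (𝓝 (-180)) := by
  have hI := tendsto_equilibriumInsulin_nhdsGT_zero
  have h := (tendsto_f₂_nhdsGT_zero.add
    (tendsto_f₃_nhdsGT_zero.mul (tendsto_f₄_nhdsGT_zero.comp hI))).sub
    (tendsto_f₅_nhdsGT_zero.comp hI)
  norm_num at h
  exact h

lemma tendsto_Φ_atTop : Tendsto Φ atTop atTop := by
  have hlin : Tendsto (fun G : ℝ => G / 10000 * 40 - 180) atTop atTop :=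
    tendsto_atTop_add_const_right _ _ ((tendsto_id.atTop_div_const (by norm_num)).atTop_mul_const
      (by norm_num))
  refine tendsto_atTop_mono' atTop ?_ hlin
  filter_upwards [eventually_gt_atTop 0] with G hG
  have hI := equilibriumInsulin_pos hG
  have huptake : G / 10000 * 40 ≤ f₃ G * f₄ (equilibriumInsulin G) :=
    mul_le_mul_of_nonneg_left (forty_le_f₄ hI) (f₃_pos hG).le
  rw [Φ_apply]
  linarith [f₂_nonneg hG, f₅_le hI]

/-- `Φ` is strictly increasing on `(0, ∞)`, `Φ(G) → −180` as `G → 0⁺`, and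
`Φ(G) → +∞` as `G → +∞`; moreover `f₁, f₂, f₄` are strictly increasing on `(0, ∞)`,
`f₃` is strictly increasing and positive there, and `f₅` is strictly decreasing there. -/
theorem stmt9 :
    StrictMonoOn Φ (Set.Ioi (0 : ℝ)) ∧
    Filter.Tendsto Φ (nhdsWithin 0 (Set.Ioi (0 : ℝ))) (nhds (-180)) ∧
    Filter.Tendsto Φ Filter.atTop Filter.atTop ∧
    StrictMonoOn f₁ (Set.Ioi (0 : ℝ)) ∧
    StrictMonoOn f₂ (Set.Ioi (0 : ℝ)) ∧
    StrictMonoOn f₃ (Set.Ioi (0 : ℝ)) ∧ (∀ G : ℝ, 0 < G → 0 < f₃ G) ∧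
    StrictMonoOn f₄ (Set.Ioi (0 : ℝ)) ∧
    StrictAntiOn f₅ (Set.Ioi (0 : ℝ)) :=
  ⟨Φ_strictMonoOn, tendsto_Φ_nhdsGT_zero, tendsto_Φ_atTop, f₁_strictMonoOn, f₂_strictMonoOn,
    f₃_strictMono.strictMonoOn _, fun _ => f₃_pos, f₄_strictMonoOn, f₅_strictAntiOn⟩
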